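/- Let n = 2ν+1 be odd with ν ≥ 2. Then for every r ∈ {1, 2, …, ν}, the number λ_r = 8 cos²(rπ/(n−1)) is an eigenvalue of the Laplacian matrix L(F_2(C_n)); moreover λ_ν = 0, and λ_1 = 8 cos²(π/(n−1)) is a lower bound for the largest Laplacian eigenvalue (spectral radius) of F_2(C_n). -/

import Mathlib

open Finset Polynomial Real Matrix

noncomputable section

/-- The `k`-token graph of a simple graph `G`. -/
def tokenGraph {V : Type*} [DecidableEq V] (G : SimpleGraph V) (k : ℕ) :
    SimpleGraph {s : Finset V // s.card = k} where
  Adj A B := ∃ a b, G.Adj a b ∧ a ∈ A.1 ∧ b ∈ B.1 ∧ symmDiff A.1 B.1 = {a, b}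
  symm := by
    refine ⟨?_⟩
    rintro A B ⟨a, b, hab, ha, hb, hd⟩
    exact ⟨b, a, hab.symm, hb, ha, by rw [symmDiff_comm, hd, Finset.pair_comm]⟩
  loopless := by
    refine ⟨?_⟩
    rintro A ⟨a, b, hab, ha, hb, hd⟩
    rw [symmDiff_self, Finset.bot_eq_empty] at hd
    exact (Finset.insert_ne_empty a {b}) hd.symm

/-- The Laplacian matrix (over ℝ) of a finite simple graph. -/
def lapMat {V : Type*} [Fintype V] [DecidableEq V] (G : SimpleGraph V) : Matrix V V ℝ :=
  letI := Classical.decRel G.Adj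
  G.lapMatrix ℝ

/-- The Laplacian matrix (over ℂ) of a finite simple graph. -/
def lapMatC {V : Type*} [Fintype V] [DecidableEq V] (G : SimpleGraph V) : Matrix V V ℂ :=
  letI := Classical.decRel G.Adj
  G.lapMatrix ℂ

/-- The Laplacian eigenvalues of `G`, with multiplicity, in nondecreasing order. -/
def lapSpec {V : Type*} [Fintype V] [DecidableEq V] (G : SimpleGraph V) : List ℝ :=
  ((lapMat G).charpoly.roots).sort (· ≤ ·)

/-- The algebraic connectivity: the second-smallest Laplacian eigenvalue. -/
def algConn {V : Type*} [Fintype V] [DecidableEq V] (G : SimpleGraph V) : ℝ :=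
  (lapSpec G).getD 1 0

/-- The largest Laplacian eigenvalue (Laplacian spectral radius). -/
def lapSpecRadius {V : Type*} [Fintype V] [DecidableEq V] (G : SimpleGraph V) : ℝ :=
  (lapSpec G).getLastD 0

/-- `μ` is an eigenvalue of the Laplacian matrix of `G`. -/
def IsLapEigen {V : Type*} [Fintype V] [DecidableEq V] (G : SimpleGraph V) (μ : ℝ) : Prop :=
  ∃ v : V → ℝ, v ≠ 0 ∧ (lapMat G).mulVec v = μ • v

/-- The induced subgraph of `G` on the complement of the vertex `i` (i.e. `G ∖ i`). -/
def deleteVert {V : Type*} (G : SimpleGraph V) (i : V) : SimpleGraph {v : V // v ≠ i} :=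
  SimpleGraph.comap Subtype.val G

/-- The cycle graph on `ℤ/nℤ`, where `i` is adjacent to `i ± 1`. -/
def cycleG (n : ℕ) : SimpleGraph (ZMod n) where
  Adj x y := x ≠ y ∧ (x - y = 1 ∨ y - x = 1)
  symm := by refine ⟨?_⟩; rintro x y ⟨hxy, h⟩; exact ⟨hxy.symm, h.symm⟩
  loopless := by refine ⟨?_⟩; rintro x ⟨hx, _⟩; exact hx rfl

/-- The inclusion matrix from `h`-subsets to `k`-subsets: rows indexed by `k`-subsets `A`,
columns by `h`-subsets `X`, with entry `1` if `X ⊆ A` and `0` otherwise. -/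
def inclMatrix (V : Type*) [Fintype V] [DecidableEq V] (h k : ℕ) :
    Matrix {s : Finset V // s.card = k} {s : Finset V // s.card = h} ℝ :=
  fun A X => if X.1 ⊆ A.1 then 1 else 0

/-- The `(n;k)`-binomial matrix: rows indexed by `k`-subsets `A`, columns by vertices `j`,
with entry `1` if `j ∈ A` and `0` otherwise. -/
def binomMatrix (V : Type*) [Fintype V] [DecidableEq V] (k : ℕ) :
    Matrix {s : Finset V // s.card = k} V ℝ :=
  fun A j => if j ∈ A.1 then 1 else 0

/-- The Kneser graph `K(n,k)`. -/
def kneserGraph (n k : ℕ) : SimpleGraph {s : Finset (Fin n) // s.card = k} where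
  Adj A B := A ≠ B ∧ Disjoint A.1 B.1
  symm := by refine ⟨?_⟩; rintro A B ⟨h1, h2⟩; exact ⟨h1.symm, h2.symm⟩
  loopless := by refine ⟨?_⟩; rintro A ⟨h1, _⟩; exact h1 rfl

end

noncomputable section


namespace Stmt15Aux

open Finset Real

lemma pair_eq_pair_iff' {α : Type*} [DecidableEq α] {a b c d : α} :
    ({a, b} : Finset α) = {c, d} ↔ a = c ∧ b = d ∨ a = d ∧ b = c := by
  rw [← Finset.coe_inj, Finset.coe_insert, Finset.coe_singleton, Finset.coe_insert,
    Finset.coe_singleton, Set.pair_eq_pair_iff]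

lemma card_pair_iff {α : Type*} [DecidableEq α] {a b : α} :
    ({a, b} : Finset α).card = 2 ↔ a ≠ b := by
  constructor
  · rintro h rfl
    simp at h
  · exact Finset.card_pair

lemma symmDiff_pair {α : Type*} [DecidableEq α] {i j b : α} (hij : i ≠ j) (hbj : b ≠ j)
    (hbi : b ≠ i) : symmDiff ({i, j} : Finset α) {b, j} = {i, b} := by
  ext x
  rw [Finset.mem_symmDiff]
  simp only [Finset.mem_insert, Finset.mem_singleton]
  constructor
  · rintro (⟨h1 | h1, h2⟩ | ⟨h1 | h1, h2⟩)
    · exact Or.inl h1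
    · exact absurd (Or.inr h1) h2
    · exact Or.inr h1
    · exact absurd (Or.inr h1) h2
  · rintro (rfl | rfl)
    · exact Or.inl ⟨Or.inl rfl, by rintro (h | h); exacts [hbi h.symm, hij h]⟩
    · exact Or.inr ⟨Or.inl rfl, by rintro (h | h); exacts [hbi h, hbj h]⟩

lemma token_adj_iff {n : ℕ} (h1 : (1 : ZMod n) ≠ 0)
    (A B : {s : Finset (ZMod n) // s.card = 2}) (i j : ZMod n) (hij : i ≠ j)
    (hA : A.1 = {i, j}) :
    (tokenGraph (cycleG n) 2).Adj A B ↔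
      B.1 = {i + 1, j} ∨ B.1 = {i - 1, j} ∨ B.1 = {i, j + 1} ∨ B.1 = {i, j - 1} := by
  constructor
  · rintro ⟨a, b, ⟨hne, hor⟩, ha, hb, hd⟩
    have haB : a ∉ B.1 := by
      have hth := Finset.ext_iff.mp hd a
      rw [Finset.mem_symmDiff] at hth
      intro haB
      rcases hth.mpr (by simp) with ⟨_, h⟩ | ⟨_, h⟩
      · exact h haB
      · exact h ha
    have hbA : b ∉ A.1 := by
      have hth := Finset.ext_iff.mp hd b
      rw [Finset.mem_symmDiff] at hth
      intro hbA
      rcases hth.mpr (by simp) with ⟨_, h⟩ | ⟨_, h⟩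
      · exact h hb
      · exact h hbA
    have hBA : B.1 = insert b (A.1.erase a) := by
      ext x
      have hx := Finset.ext_iff.mp hd x
      rw [Finset.mem_symmDiff] at hx
      simp only [Finset.mem_insert, Finset.mem_singleton] at hx
      simp only [Finset.mem_insert, Finset.mem_erase]
      constructor
      · intro hxB
        by_cases hxA : x ∈ A.1
        · exact Or.inr ⟨fun h => haB (h ▸ hxB), hxA⟩
        · rcases hx.mp (Or.inr ⟨hxB, hxA⟩) with h | h
          · exact absurd (h ▸ hxB) haB
          · exact Or.inl h
      · rintro (rfl | ⟨hxa, hxA⟩)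
        · exact hb
        · by_contra hxB
          rcases hx.mp (Or.inl ⟨hxA, hxB⟩) with h | h
          · exact hxa h
          · exact hbA (h ▸ hxA)
    have hb' : b = a + 1 ∨ b = a - 1 := by
      rcases hor with h | h
      · exact Or.inr (by linear_combination -h)
      · exact Or.inl (by linear_combination h)
    rw [hA] at ha hBA
    rcases Finset.mem_insert.mp ha with rfl | ha'
    · have herase : ({a, j} : Finset (ZMod n)).erase a = {j} :=
        Finset.erase_insert (by simpa using hij)
      rw [herase] at hBA
      rcases hb' with rfl | rfl
      · exact Or.inl hBA
      · exact Or.inr (Or.inl hBA)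
    · have ha2 : a = j := Finset.mem_singleton.mp ha'
      subst ha2
      have herase : ({i, a} : Finset (ZMod n)).erase a = {i} := by
        rw [Finset.erase_insert_of_ne hij, Finset.erase_singleton]
        simp
      rw [herase] at hBA
      rcases hb' with rfl | rfl
      · exact Or.inr (Or.inr (Or.inl (by rw [hBA, Finset.pair_comm])))
      · exact Or.inr (Or.inr (Or.inr (by rw [hBA, Finset.pair_comm])))
  · intro hB
    have hiadd : i + 1 ≠ i := fun h => h1 (by linear_combination h)
    have hisub : i - 1 ≠ i := fun h => h1 (by linear_combination -h)
    have hjadd : j + 1 ≠ j := fun h => h1 (by linear_combination h)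
    have hjsub : j - 1 ≠ j := fun h => h1 (by linear_combination -h)
    rcases hB with hB | hB | hB | hB
    · have hvalid : i + 1 ≠ j := card_pair_iff.mp (hB ▸ B.2)
      exact ⟨i, i + 1, ⟨hiadd.symm, Or.inr (by ring)⟩, by rw [hA]; simp, by rw [hB]; simp,
        by rw [hA, hB]; exact symmDiff_pair hij hvalid hiadd⟩
    · have hvalid : i - 1 ≠ j := card_pair_iff.mp (hB ▸ B.2)
      exact ⟨i, i - 1, ⟨hisub.symm, Or.inl (by ring)⟩, by rw [hA]; simp, by rw [hB]; simp,
        by rw [hA, hB]; exact symmDiff_pair hij hvalid hisub⟩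
    · have hvalid : i ≠ j + 1 := card_pair_iff.mp (hB ▸ B.2)
      refine ⟨j, j + 1, ⟨hjadd.symm, Or.inr (by ring)⟩, by rw [hA]; simp, by rw [hB]; simp, ?_⟩
      rw [hA, hB, Finset.pair_comm i j, Finset.pair_comm i (j + 1)]
      exact symmDiff_pair hij.symm (fun h => hvalid h.symm) hjadd
    · have hvalid : i ≠ j - 1 := card_pair_iff.mp (hB ▸ B.2)
      refine ⟨j, j - 1, ⟨hjsub.symm, Or.inl (by ring)⟩, by rw [hA]; simp, by rw [hB]; simp, ?_⟩
      rw [hA, hB, Finset.pair_comm i j, Finset.pair_comm i (j - 1)]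
      exact symmDiff_pair hij.symm (fun h => hvalid h.symm) hjsub

/-- The basic trigonometric weight function. -/
def cF (n : ℕ) (θ : ℝ) (x : ZMod n) : ℝ :=
  if x = 0 then 0 else (-1 : ℝ) ^ x.val * Real.sin ((2 * (x.val : ℝ) - 1) * θ / 2)

/-- The eigenvector candidate. -/
def vF (n : ℕ) (θ : ℝ) (A : {s : Finset (ZMod n) // s.card = 2}) : ℝ :=
  ∑ p ∈ A.1, ∑ q ∈ A.1, cF n θ (p - q)

lemma cF_symm {n ν r : ℕ} [NeZero n] (hn : n = 2 * ν + 1) {θ : ℝ}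
    (hθ : (ν : ℝ) * θ = (r : ℝ) * π) (x : ZMod n) : cF n θ (-x) = cF n θ x := by
  by_cases hx : x = 0
  · rw [hx, neg_zero]
  · have hxm : (-x) ≠ 0 := by simpa using hx
    rw [cF, cF, if_neg hx, if_neg hxm]
    have hm1 : x.val ≠ 0 := fun h => hx (by rwa [← ZMod.val_eq_zero])
    have hmlt : x.val < n := ZMod.val_lt x
    have hoddn : Odd n := ⟨ν, by omega⟩
    have hneg : (-x).val = n - x.val := by rw [ZMod.neg_val, if_neg hx]
    rw [hneg]
    have hparity : ((-1 : ℝ)) ^ (n - x.val) = -(-1 : ℝ) ^ x.val := by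
      rcases Nat.even_or_odd x.val with he | ho
      · rw [Even.neg_one_pow he, Odd.neg_one_pow (Nat.Odd.sub_even hmlt.le hoddn he)]
      · rw [Odd.neg_one_pow ho, Even.neg_one_pow (Nat.Odd.sub_odd hoddn ho)]
        norm_num
    have hncast : (n : ℝ) = 2 * (ν : ℝ) + 1 := by rw [hn]; push_cast; ring
    have harg : (2 * ((n - x.val : ℕ) : ℝ) - 1) * θ / 2
        = (r : ℝ) * (2 * π) - (2 * (x.val : ℝ) - 1) * θ / 2 := by
      rw [Nat.cast_sub hmlt.le]
      linear_combination θ * hncast + 2 * hθ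
    rw [harg, Real.sin_nat_mul_two_pi_sub, hparity]
    ring

lemma cF_rec {n : ℕ} [NeZero n] (hn5 : 5 ≤ n) {θ : ℝ} {x : ZMod n}
    (hx0 : x ≠ 0) (hx1 : x ≠ 1) (hxm : x ≠ -1) :
    cF n θ (x + 1) + cF n θ (x - 1) = -(2 * Real.cos θ) * cF n θ x := by
  have hmlt : x.val < n := ZMod.val_lt x
  have hx : ((x.val : ℕ) : ZMod n) = x := by rw [ZMod.natCast_val, ZMod.cast_id]
  have hm0 : x.val ≠ 0 := fun h => hx0 (by rw [← hx, h, Nat.cast_zero])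
  have hm1 : x.val ≠ 1 := fun h => hx1 (by rw [← hx, h, Nat.cast_one])
  have hmtop : x.val ≠ n - 1 := by
    intro h
    apply hxm
    rw [← hx, h]
    rw [Nat.cast_sub (by omega), Nat.cast_one, ZMod.natCast_self, zero_sub]
  have hv1 : (x + 1).val = x.val + 1 := by
    have h : x + 1 = ((x.val + 1 : ℕ) : ZMod n) := by push_cast [hx]; ring
    rw [h, ZMod.val_cast_of_lt (by omega)]
  have hv2 : (x - 1).val = x.val - 1 := by
    have h : x - 1 = ((x.val - 1 : ℕ) : ZMod n) := by
      rw [Nat.cast_sub (by omega), Nat.cast_one, hx]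
    rw [h, ZMod.val_cast_of_lt (by omega)]
  have hxp0 : x + 1 ≠ 0 := fun h => hxm (by linear_combination h)
  have hxm0 : x - 1 ≠ 0 := fun h => hx1 (by linear_combination h)
  rw [cF, cF, cF, if_neg hxp0, if_neg hxm0, if_neg hx0, hv1, hv2]
  have e1 : (2 * ((x.val + 1 : ℕ) : ℝ) - 1) * θ / 2 = (2 * (x.val : ℝ) - 1) * θ / 2 + θ := by
    push_cast; ring
  have e2 : (2 * ((x.val - 1 : ℕ) : ℝ) - 1) * θ / 2 = (2 * (x.val : ℝ) - 1) * θ / 2 - θ := by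
    rw [Nat.cast_sub (by omega)]; push_cast; ring
  rw [e1, e2, Real.sin_add, Real.sin_sub]
  have s1 : (-1 : ℝ) ^ (x.val + 1) = -(-1 : ℝ) ^ x.val := by rw [pow_succ]; ring
  have s2 : (-1 : ℝ) ^ (x.val - 1) = -(-1 : ℝ) ^ x.val := by
    have h : x.val - 1 + 1 = x.val := by omega
    conv_rhs => rw [← h]
    rw [pow_succ]; ring
  rw [s1, s2]
  ring

lemma cF_one {n : ℕ} [NeZero n] (hn5 : 5 ≤ n) (θ : ℝ) :
    cF n θ 1 = -Real.sin (θ / 2) := by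
  haveI : Fact (1 < n) := ⟨by omega⟩
  have h0 : (1 : ZMod n) ≠ 0 := one_ne_zero
  rw [cF, if_neg h0, ZMod.val_one]
  have h : (2 * ((1 : ℕ) : ℝ) - 1) * θ / 2 = θ / 2 := by push_cast; ring
  rw [h, pow_one]
  ring

lemma cF_two {n : ℕ} [NeZero n] (hn5 : 5 ≤ n) (θ : ℝ) :
    cF n θ 2 = Real.sin (θ / 2 + θ) := by
  have h2 : (2 : ZMod n) = ((2 : ℕ) : ZMod n) := by norm_cast
  have h0 : (2 : ZMod n) ≠ 0 := by
    rw [h2, Ne, ZMod.natCast_eq_zero_iff]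
    intro h
    exact absurd (Nat.le_of_dvd (by norm_num) h) (by omega)
  have hval : (2 : ZMod n).val = 2 := by rw [h2, ZMod.val_cast_of_lt (by omega)]
  rw [cF, if_neg h0, hval]
  have h : (2 * ((2 : ℕ) : ℝ) - 1) * θ / 2 = θ / 2 + θ := by push_cast; ring
  rw [h]
  norm_num

lemma wsum_pair {n : ℕ} (θ : ℝ) (hc0 : cF n θ 0 = 0)
    (hsym : ∀ x : ZMod n, cF n θ (-x) = cF n θ x) {a b : ZMod n} (hab : a ≠ b) :
    (∑ p ∈ ({a, b} : Finset (ZMod n)), ∑ q ∈ ({a, b} : Finset (ZMod n)), cF n θ (p - q))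
      = 2 * cF n θ (a - b) := by
  rw [Finset.sum_pair hab, Finset.sum_pair hab, Finset.sum_pair hab]
  have h : b - a = -(a - b) := by ring
  simp only [sub_self, hc0, h, hsym]
  ring

lemma token_main {n ν r : ℕ} [NeZero n] (hν : 2 ≤ ν) (hn : n = 2 * ν + 1)
    (hr1 : 1 ≤ r) (hrν : r ≤ ν) {θ : ℝ} (hθdef : θ = (r : ℝ) * π / (ν : ℝ))
    [inst : DecidableRel (tokenGraph (cycleG n) 2).Adj]
    (A : {s : Finset (ZMod n) // s.card = 2}) :
    (((tokenGraph (cycleG n) 2).degree A : ℕ) : ℝ) * vF n θ A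
      - ∑ u ∈ (tokenGraph (cycleG n) 2).neighborFinset A, vF n θ u
      = (4 + 4 * Real.cos θ) * vF n θ A := by
  have hνR : (0 : ℝ) < (ν : ℝ) := by exact_mod_cast (by omega : 0 < ν)
  have hθ : (ν : ℝ) * θ = (r : ℝ) * π := by rw [hθdef]; field_simp
  have hn5 : 5 ≤ n := by omega
  haveI : Fact (1 < n) := ⟨by omega⟩
  have h1 : (1 : ZMod n) ≠ 0 := one_ne_zero
  have h2 : (2 : ZMod n) ≠ 0 := by
    have h2' : ((2 : ℕ) : ZMod n) ≠ 0 := by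
      rw [Ne, ZMod.natCast_eq_zero_iff]
      intro h
      exact absurd (Nat.le_of_dvd (by norm_num) h) (by omega)
    simpa using h2'
  have hc0 : cF n θ 0 = 0 := by rw [cF, if_pos rfl]
  have hsym : ∀ x : ZMod n, cF n θ (-x) = cF n θ x := fun x => cF_symm hn hθ x
  have hbound : 2 * (2 * cF n θ 1) - (2 * cF n θ 2 + 2 * cF n θ 2)
      = (4 + 4 * Real.cos θ) * (2 * cF n θ 1) := by
    rw [cF_one hn5, cF_two hn5, Real.sin_add]
    have hs2 := Real.sin_two_mul (θ / 2)
    have hc2 := Real.cos_two_mul (θ / 2)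
    rw [show 2 * (θ / 2) = θ by ring] at hs2 hc2
    rw [hs2, hc2]
    ring
  obtain ⟨i, j, hij, hA⟩ := Finset.card_eq_two.mp A.2
  set T1 : Finset (ZMod n) := {i + 1, j} with hT1
  set T2 : Finset (ZMod n) := {i - 1, j} with hT2
  set T3 : Finset (ZMod n) := {i, j + 1} with hT3
  set T4 : Finset (ZMod n) := {i, j - 1} with hT4
  have himg : ((tokenGraph (cycleG n) 2).neighborFinset A).image Subtype.val
      = ({T1, T2, T3, T4} : Finset (Finset (ZMod n))).filter (fun s => s.card = 2) := by
    ext s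
    simp only [Finset.mem_image, SimpleGraph.mem_neighborFinset, Finset.mem_filter,
      Finset.mem_insert, Finset.mem_singleton]
    constructor
    · rintro ⟨B, hadj, rfl⟩
      exact ⟨(token_adj_iff h1 A B i j hij hA).mp hadj, B.2⟩
    · rintro ⟨hs, hcard⟩
      exact ⟨⟨s, hcard⟩, (token_adj_iff h1 A ⟨s, hcard⟩ i j hij hA).mpr hs, rfl⟩
  have hsum_img : ∑ u ∈ (tokenGraph (cycleG n) 2).neighborFinset A, vF n θ u
      = ∑ s ∈ ((tokenGraph (cycleG n) 2).neighborFinset A).image Subtype.val, ∑ p ∈ s, ∑ q ∈ s, cF n θ (p - q) := by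
    rw [Finset.sum_image (fun x _ y _ h => Subtype.ext h)]
    rfl
  have hdeg : (tokenGraph (cycleG n) 2).degree A = (((tokenGraph (cycleG n) 2).neighborFinset A).image Subtype.val).card := by
    rw [Finset.card_image_of_injective _ Subtype.val_injective]
    rfl
  have hvA : vF n θ A = 2 * cF n θ (i - j) := by
    rw [vF, hA]
    exact wsum_pair θ hc0 hsym hij
  have hx0 : i - j ≠ 0 := sub_ne_zero.mpr hij
  have hcond1 : (i + 1 = j) ↔ (i - j = -1) := by constructor <;> intro h <;> linear_combination h
  have hcond2 : (i - 1 = j) ↔ (i - j = 1) := by constructor <;> intro h <;> linear_combination h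
  have hcond3 : (i = j + 1) ↔ (i - j = 1) := by constructor <;> intro h <;> linear_combination h
  have hcond4 : (i = j - 1) ↔ (i - j = -1) := by constructor <;> intro h <;> linear_combination h
  by_cases hxe1 : i - j = 1
  · have hnem : i - j ≠ -1 := by
      rw [hxe1]; intro h; exact h2 (by linear_combination h)
    have hT1c : T1.card = 2 := card_pair_iff.mpr (fun h => hnem (hcond1.mp h))
    have hT4c : T4.card = 2 := card_pair_iff.mpr (fun h => hnem (hcond4.mp h))
    have hT2eq : T2 = {j} := by
      rw [hT2, hcond2.mpr hxe1]
      exact Finset.insert_eq_self.mpr (Finset.mem_singleton_self j)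
    have hT2c : ¬ (T2.card = 2) := by rw [hT2eq]; simp
    have hT3eq : T3 = {i} := by
      rw [hT3, show j + 1 = i from (hcond3.mpr hxe1).symm]
      exact Finset.insert_eq_self.mpr (Finset.mem_singleton_self i)
    have hT3c : ¬ (T3.card = 2) := by rw [hT3eq]; simp
    have hne14 : T1 ≠ T4 := by
      rw [hT1, hT4]
      intro h
      rcases pair_eq_pair_iff'.mp h with ⟨h', _⟩ | ⟨_, h'⟩
      · exact h1 (by linear_combination h')
      · exact hij h'.symm
    have hfil : ({T1, T2, T3, T4} : Finset (Finset (ZMod n))).filter (fun s => s.card = 2)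
        = {T1, T4} := by
      rw [Finset.filter_insert, if_pos hT1c, Finset.filter_insert, if_neg hT2c,
        Finset.filter_insert, if_neg hT3c, Finset.filter_singleton, if_pos hT4c]
    have hdeg2 : (tokenGraph (cycleG n) 2).degree A = 2 := by rw [hdeg, himg, hfil, Finset.card_pair hne14]
    have hw1 : ∑ p ∈ T1, ∑ q ∈ T1, cF n θ (p - q) = 2 * cF n θ (i + 1 - j) := by
      rw [hT1]; exact wsum_pair θ hc0 hsym (fun h => hnem (hcond1.mp h))
    have hw4 : ∑ p ∈ T4, ∑ q ∈ T4, cF n θ (p - q) = 2 * cF n θ (i - (j - 1)) := by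
      rw [hT4]; exact wsum_pair θ hc0 hsym (fun h => hnem (hcond4.mp h))
    rw [hsum_img, himg, hfil, Finset.sum_pair hne14, hdeg2, hvA, hw1, hw4]
    rw [show i + 1 - j = 2 from by linear_combination hxe1,
      show i - (j - 1) = 2 from by linear_combination hxe1, hxe1]
    push_cast
    linarith [hbound]
  · by_cases hxem : i - j = -1
    · have hT2c : T2.card = 2 := card_pair_iff.mpr (fun h => hxe1 (hcond2.mp h))
      have hT3c : T3.card = 2 := card_pair_iff.mpr (fun h => hxe1 (hcond3.mp h))
      have hT1eq : T1 = {j} := by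
        rw [hT1, hcond1.mpr hxem]
        exact Finset.insert_eq_self.mpr (Finset.mem_singleton_self j)
      have hT1c : ¬ (T1.card = 2) := by rw [hT1eq]; simp
      have hT4eq : T4 = {i} := by
        rw [hT4, show j - 1 = i from (hcond4.mpr hxem).symm]
        exact Finset.insert_eq_self.mpr (Finset.mem_singleton_self i)
      have hT4c : ¬ (T4.card = 2) := by rw [hT4eq]; simp
      have hne23 : T2 ≠ T3 := by
        rw [hT2, hT3]
        intro h
        rcases pair_eq_pair_iff'.mp h with ⟨h', _⟩ | ⟨_, h'⟩
        · exact h1 (by linear_combination -h')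
        · exact hij h'.symm
      have hfil : ({T1, T2, T3, T4} : Finset (Finset (ZMod n))).filter (fun s => s.card = 2)
          = {T2, T3} := by
        rw [Finset.filter_insert, if_neg hT1c, Finset.filter_insert, if_pos hT2c,
          Finset.filter_insert, if_pos hT3c, Finset.filter_singleton, if_neg hT4c]
        simp
      have hdeg2 : (tokenGraph (cycleG n) 2).degree A = 2 := by rw [hdeg, himg, hfil, Finset.card_pair hne23]
      have hw2 : ∑ p ∈ T2, ∑ q ∈ T2, cF n θ (p - q) = 2 * cF n θ (i - 1 - j) := by
        rw [hT2]; exact wsum_pair θ hc0 hsym (fun h => hxe1 (hcond2.mp h))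
      have hw3 : ∑ p ∈ T3, ∑ q ∈ T3, cF n θ (p - q) = 2 * cF n θ (i - (j + 1)) := by
        rw [hT3]; exact wsum_pair θ hc0 hsym (fun h => hxe1 (hcond3.mp h))
      rw [hsum_img, himg, hfil, Finset.sum_pair hne23, hdeg2, hvA, hw2, hw3]
      rw [show i - 1 - j = -2 from by linear_combination hxem,
        show i - (j + 1) = -2 from by linear_combination hxem, hxem,
        show (-2 : ZMod n) = -(2 : ZMod n) from by norm_num, hsym 2,
        show (-1 : ZMod n) = -(1 : ZMod n) from by norm_num, hsym 1]
      push_cast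
      linarith [hbound]
    · have hT1c : T1.card = 2 := card_pair_iff.mpr (fun h => hxem (hcond1.mp h))
      have hT2c : T2.card = 2 := card_pair_iff.mpr (fun h => hxe1 (hcond2.mp h))
      have hT3c : T3.card = 2 := card_pair_iff.mpr (fun h => hxe1 (hcond3.mp h))
      have hT4c : T4.card = 2 := card_pair_iff.mpr (fun h => hxem (hcond4.mp h))
      have hne12 : T1 ≠ T2 := by
        rw [hT1, hT2]; intro h
        rcases pair_eq_pair_iff'.mp h with ⟨h', _⟩ | ⟨h', h''⟩
        · exact h2 (by linear_combination h')
        · exact h2 (by linear_combination h' + h'')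
      have hne13 : T1 ≠ T3 := by
        rw [hT1, hT3]; intro h
        rcases pair_eq_pair_iff'.mp h with ⟨h', _⟩ | ⟨_, h'⟩
        · exact h1 (by linear_combination h')
        · exact hij h'.symm
      have hne14 : T1 ≠ T4 := by
        rw [hT1, hT4]; intro h
        rcases pair_eq_pair_iff'.mp h with ⟨h', _⟩ | ⟨_, h'⟩
        · exact h1 (by linear_combination h')
        · exact hij h'.symm
      have hne23 : T2 ≠ T3 := by
        rw [hT2, hT3]; intro h
        rcases pair_eq_pair_iff'.mp h with ⟨h', _⟩ | ⟨_, h'⟩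
        · exact h1 (by linear_combination -h')
        · exact hij h'.symm
      have hne24 : T2 ≠ T4 := by
        rw [hT2, hT4]; intro h
        rcases pair_eq_pair_iff'.mp h with ⟨h', _⟩ | ⟨_, h'⟩
        · exact h1 (by linear_combination -h')
        · exact hij h'.symm
      have hne34 : T3 ≠ T4 := by
        rw [hT3, hT4]; intro h
        rcases pair_eq_pair_iff'.mp h with ⟨_, h'⟩ | ⟨h', h''⟩
        · exact h2 (by linear_combination h')
        · exact h2 (by linear_combination h'' + h')
      have hm1 : T1 ∉ ({T2, T3, T4} : Finset (Finset (ZMod n))) := by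
        simp [hne12, hne13, hne14]
      have hm2 : T2 ∉ ({T3, T4} : Finset (Finset (ZMod n))) := by
        simp [hne23, hne24]
      have hfil : ({T1, T2, T3, T4} : Finset (Finset (ZMod n))).filter (fun s => s.card = 2)
          = {T1, T2, T3, T4} := by
        rw [Finset.filter_insert, if_pos hT1c, Finset.filter_insert, if_pos hT2c,
          Finset.filter_insert, if_pos hT3c, Finset.filter_singleton, if_pos hT4c]
      have hdeg4 : (tokenGraph (cycleG n) 2).degree A = 4 := by
        rw [hdeg, himg, hfil, Finset.card_insert_of_notMem hm1,
          Finset.card_insert_of_notMem hm2, Finset.card_pair hne34]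
      have hw1 : ∑ p ∈ T1, ∑ q ∈ T1, cF n θ (p - q) = 2 * cF n θ (i + 1 - j) := by
        rw [hT1]; exact wsum_pair θ hc0 hsym (fun h => hxem (hcond1.mp h))
      have hw2 : ∑ p ∈ T2, ∑ q ∈ T2, cF n θ (p - q) = 2 * cF n θ (i - 1 - j) := by
        rw [hT2]; exact wsum_pair θ hc0 hsym (fun h => hxe1 (hcond2.mp h))
      have hw3 : ∑ p ∈ T3, ∑ q ∈ T3, cF n θ (p - q) = 2 * cF n θ (i - (j + 1)) := by
        rw [hT3]; exact wsum_pair θ hc0 hsym (fun h => hxe1 (hcond3.mp h))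
      have hw4 : ∑ p ∈ T4, ∑ q ∈ T4, cF n θ (p - q) = 2 * cF n θ (i - (j - 1)) := by
        rw [hT4]; exact wsum_pair θ hc0 hsym (fun h => hxem (hcond4.mp h))
      have hrec := cF_rec (θ := θ) hn5 hx0 hxe1 hxem
      rw [hsum_img, himg, hfil, Finset.sum_insert hm1, Finset.sum_insert hm2,
        Finset.sum_pair hne34, hdeg4, hvA, hw1, hw2, hw3, hw4]
      rw [show i + 1 - j = (i - j) + 1 from by ring, show i - 1 - j = (i - j) - 1 from by ring,
        show i - (j + 1) = (i - j) - 1 from by ring, show i - (j - 1) = (i - j) + 1 from by ring]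
      push_cast
      linear_combination (-4 : ℝ) * hrec

lemma token_eigen {n ν r : ℕ} [NeZero n] (hν : 2 ≤ ν) (hn : n = 2 * ν + 1)
    (hr1 : 1 ≤ r) (hrν : r ≤ ν) :
    IsLapEigen (tokenGraph (cycleG n) 2)
      (4 + 4 * Real.cos ((r : ℝ) * π / (ν : ℝ))) := by
  set θ : ℝ := (r : ℝ) * π / (ν : ℝ) with hθdef
  have hνR : (0 : ℝ) < (ν : ℝ) := by exact_mod_cast (by omega : 0 < ν)
  have hθ : (ν : ℝ) * θ = (r : ℝ) * π := by rw [hθdef]; field_simp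
  have hn5 : 5 ≤ n := by omega
  haveI : Fact (1 < n) := ⟨by omega⟩
  have h1 : (1 : ZMod n) ≠ 0 := one_ne_zero
  have hc0 : cF n θ 0 = 0 := by rw [cF, if_pos rfl]
  have hsym : ∀ x : ZMod n, cF n θ (-x) = cF n θ x := fun x => cF_symm hn hθ x
  have hθpos : 0 < θ := by
    apply div_pos (mul_pos _ Real.pi_pos) hνR
    exact_mod_cast hr1
  have hθle : θ ≤ π := by
    rw [hθdef, div_le_iff₀ hνR]
    have hrν' : (r : ℝ) ≤ (ν : ℝ) := by exact_mod_cast hrν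
    nlinarith [Real.pi_pos]
  have hsin : 0 < Real.sin (θ / 2) := by
    apply Real.sin_pos_of_pos_of_lt_pi (by linarith)
    nlinarith [Real.pi_pos]
  refine ⟨vF n θ, ?_, ?_⟩
  · intro hv0
    have h01 : (0 : ZMod n) ≠ 1 := fun h => h1 h.symm
    have hA0 : (({0, 1} : Finset (ZMod n))).card = 2 := Finset.card_pair h01
    have hz := congrFun hv0 ⟨{0, 1}, hA0⟩
    rw [Pi.zero_apply] at hz
    have hvv : vF n θ ⟨{0, 1}, hA0⟩ = 2 * cF n θ ((0 : ZMod n) - 1) :=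
      wsum_pair θ hc0 hsym h01
    rw [hvv, show (0 : ZMod n) - 1 = -(1 : ZMod n) from by ring, hsym 1, cF_one hn5] at hz
    linarith
  · funext A
    rw [Pi.smul_apply, smul_eq_mul]
    unfold lapMat
    rw [SimpleGraph.lapMatrix_mulVec_apply]
    exact token_main (inst := Classical.decRel _) hν hn hr1 hrν hθdef A

lemma sorted_le_getLastD : ∀ (l : List ℝ), l.Pairwise (· ≤ ·) → ∀ d a : ℝ,
    (a ∈ l ∨ (a = d ∧ ∀ x ∈ l, d ≤ x)) → a ≤ l.getLastD d
  | [], _, d, a, h => by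
      rcases h with h | ⟨rfl, _⟩
      · simp at h
      · simp [List.getLastD]
  | b :: t, hs, d, a, h => by
      rw [List.getLastD_cons]
      have ht : t.Pairwise (· ≤ ·) := hs.of_cons
      have hb : ∀ x ∈ t, b ≤ x := (List.pairwise_cons.mp hs).1
      rcases h with h | ⟨rfl, hd⟩
      · rcases List.mem_cons.mp h with rfl | h'
        · exact sorted_le_getLastD t ht _ _ (Or.inr ⟨rfl, hb⟩)
        · exact sorted_le_getLastD t ht b a (Or.inl h')
      · have hdb : a ≤ b := hd _ List.mem_cons_self
        exact le_trans hdb (sorted_le_getLastD t ht b b (Or.inr ⟨rfl, hb⟩))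

lemma eigen_le_radius {V : Type*} [Fintype V] [DecidableEq V] (G : SimpleGraph V) {μ : ℝ}
    (h : IsLapEigen G μ) : μ ≤ lapSpecRadius G := by
  obtain ⟨v, hv0, hv⟩ := h
  have hdet : (μ • (1 : Matrix V V ℝ) - lapMat G).det = 0 := by
    rw [← Matrix.exists_mulVec_eq_zero_iff]
    refine ⟨v, hv0, ?_⟩
    rw [Matrix.sub_mulVec, Matrix.smul_mulVec, Matrix.one_mulVec, hv, sub_self]
  have heval : (lapMat G).charpoly.IsRoot μ := by
    rw [Polynomial.IsRoot, Matrix.charpoly, ← Polynomial.coe_evalRingHom, RingHom.map_det,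
      ← hdet]
    congr 1
    ext i k
    by_cases hik : i = k
    · subst hik
      simp [Matrix.charmatrix_apply_eq, Matrix.sub_apply, Matrix.smul_apply, Matrix.one_apply_eq]
    · simp [Matrix.charmatrix_apply_ne _ _ _ hik, Matrix.sub_apply, Matrix.smul_apply,
        Matrix.one_apply_ne hik]
  have hmem : μ ∈ (lapMat G).charpoly.roots :=
    Polynomial.mem_roots'.mpr ⟨(lapMat G).charpoly_monic.ne_zero, heval⟩
  have hmem' : μ ∈ lapSpec G := by
    unfold lapSpec
    rw [Multiset.mem_sort]
    exact hmem
  exact sorted_le_getLastD _ (Multiset.pairwise_sort _ _) 0 μ (Or.inl hmem')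

end Stmt15Aux

theorem stmt_15 {n ν : ℕ} [NeZero n] (hν : 2 ≤ ν) (hn : n = 2 * ν + 1) :
    (∀ r : ℕ, 1 ≤ r → r ≤ ν →
        IsLapEigen (tokenGraph (cycleG n) 2) (8 * Real.cos ((r : ℝ) * π / ((n : ℝ) - 1)) ^ 2)) ∧
      8 * Real.cos ((ν : ℝ) * π / ((n : ℝ) - 1)) ^ 2 = 0 ∧
      8 * Real.cos (π / ((n : ℝ) - 1)) ^ 2 ≤ lapSpecRadius (tokenGraph (cycleG n) 2) := by
  have hνR : ((ν : ℝ)) ≠ 0 := Nat.cast_ne_zero.mpr (by omega)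
  have hncast : (n : ℝ) - 1 = 2 * (ν : ℝ) := by rw [hn]; push_cast; ring
  have heig : ∀ r : ℕ, 1 ≤ r → r ≤ ν →
      IsLapEigen (tokenGraph (cycleG n) 2) (8 * Real.cos ((r : ℝ) * π / ((n : ℝ) - 1)) ^ 2) := by
    intro r h1 h2
    have e : 8 * Real.cos ((r : ℝ) * π / ((n : ℝ) - 1)) ^ 2
        = 4 + 4 * Real.cos ((r : ℝ) * π / (ν : ℝ)) := by
      rw [hncast, show (r : ℝ) * π / (2 * (ν : ℝ)) = ((r : ℝ) * π / (ν : ℝ)) / 2 by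
        field_simp]
      have hd := Real.cos_two_mul ((r : ℝ) * π / (ν : ℝ) / 2)
      rw [show 2 * ((r : ℝ) * π / (ν : ℝ) / 2) = (r : ℝ) * π / (ν : ℝ) by ring] at hd
      rw [hd]
      ring
    rw [e]
    exact Stmt15Aux.token_eigen hν hn h1 h2
  refine ⟨heig, ?_, ?_⟩
  · rw [hncast, show (ν : ℝ) * π / (2 * (ν : ℝ)) = π / 2 by field_simp,
      Real.cos_pi_div_two]
    ring
  · have h := Stmt15Aux.eigen_le_radius _ (heig 1 le_rfl (by omega))
    rw [Nat.cast_one, one_mul] at h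
    exact h

end
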